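/- arXiv:hep-th/9111043 — 6 statements merged into one kernel-verified Lean document; each statement's English description precedes it below -/
import Mathlib

section
/- Let k be a field of characteristic zero, L a finite-dimensional Lie algebra over k, and suppose the dual space L* carries a Lie bracket [·,·]* satisfying the compatibility (1-cocycle) condition: for all X, Y ∈ L and all f, g ∈ L*, [f,g]*([X,Y]) = [f∘ad X, g]*(Y) + [f, g∘ad X]*(Y) − [f∘ad Y, g]*(X) − [f, g∘ad Y]*(X), where (f∘ad X)(Z) = f([X,Z]). Then there exists a unique Lie algebra bracket on the vector space D = L ⊕ L* such that (i) [(X,0),(Y,0)] = ([X,Y],0) for all X,Y ∈ L, (ii) [(0,f),(0,g)] = (0,[f,g]*) for all f,g ∈ L*, and (iii) the symmetric bilinear form ⟨(X,f),(Y,g)⟩ = f(Y) + g(X) is invariant, i.e. ⟨[A,B],C⟩ = ⟨A,[B,C]⟩ for all A, B, C ∈ D. -/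
/-!
Invariance of the pairing, together with the brackets on `L` and `L*`, forces the mixed brackets
to be the coadjoint actions: `[(X, 0), (0, g)] = ((bra g)ᵀ X, -g ∘ ad X)`, with `L ≅ L**`.

Uniqueness: for two such brackets, `(A, C, D) ↦ ⟨[A, C]₁ - [A, C]₂, D⟩` is cyclically invariant
and vanishes as soon as `A, C` both lie in `L` or both in `L*`; a cyclic trilinear form with this
property is zero, and the pairing is nondegenerate.

Existence: the explicit bracket is alternating and invariant. Its Jacobiator is cyclic and
trilinear, so it is enough to check it on `L × L × L`, `L × L × L*`, `L × L* × L*` and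
`L* × L* × L*`: the outer two cases are the Jacobi identities of `L` and `L*`, the mixed ones are
the cocycle condition (and the Jacobi identity of `L*`).
-/

open Module

-- With three arguments and two summands, some cyclically adjacent pair lies in the same summand.
theorem eq_zero_of_cyclic_of_add_left {M N P : Type*} [AddZeroClass M] [AddZeroClass N]
    [AddZeroClass P] (T : M × N → M × N → M × N → P)
    (add_left : ∀ A A' C D, T (A + A') C D = T A C D + T A' C D)
    (cyclic : ∀ A C D, T A C D = T C D A)
    (h₁ : ∀ x y z : M, T (x, 0) (y, 0) (z, 0) = 0)
    (h₂ : ∀ (x y : M) (f : N), T (x, 0) (y, 0) (0, f) = 0)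
    (h₃ : ∀ (x : M) (f g : N), T (x, 0) (0, f) (0, g) = 0)
    (h₄ : ∀ f g h : N, T (0, f) (0, g) (0, h) = 0) (A C D : M × N) :
    T A C D = 0 := by
  have add_mid : ∀ A C C' D, T A (C + C') D = T A C D + T A C' D := fun A C C' D => by
    rw [cyclic A, cyclic A C, cyclic A C', add_left]
  have add_right : ∀ A C D D', T A C (D + D') = T A C D + T A C D' := fun A C D D' => by
    rw [← cyclic (D + D'), ← cyclic D, ← cyclic D', add_left]
  have h₂' : ∀ (x : M) (f : N) (y : M), T (x, 0) (0, f) (y, 0) = 0 := fun x f y => by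
    rw [cyclic, cyclic]; exact h₂ y x f
  have h₂'' : ∀ (f : N) (x y : M), T (0, f) (x, 0) (y, 0) = 0 := fun f x y => by
    rw [cyclic]; exact h₂ x y f
  have h₃' : ∀ (f : N) (x : M) (g : N), T (0, f) (x, 0) (0, g) = 0 := fun f x g => by
    rw [cyclic]; exact h₃ x g f
  have h₃'' : ∀ (f g : N) (x : M), T (0, f) (0, g) (x, 0) = 0 := fun f g x => by
    rw [← cyclic]; exact h₃ x f g
  have split : ∀ A : M × N, A = (A.1, 0) + (0, A.2) := fun A => by simp
  rw [split A, split C, split D]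
  simp only [add_left, add_mid, add_right, h₁, h₂, h₂', h₂'', h₃, h₃', h₃'', h₄, add_zero]

namespace LinearMap

variable {R X : Type*} [CommSemiring R] [AddCommMonoid X] [Module R X]

def jacobiator (B : X →ₗ[R] X →ₗ[R] X) (A C D : X) : X :=
  B (B A C) D + B (B C D) A + B (B D A) C

lemma jacobiator_add_left (B : X →ₗ[R] X →ₗ[R] X) (A A' C D : X) :
    jacobiator B (A + A') C D = jacobiator B A C D + jacobiator B A' C D := by
  simp only [jacobiator, map_add, add_apply]; abel

lemma jacobiator_cyclic (B : X →ₗ[R] X →ₗ[R] X) (A C D : X) :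
    jacobiator B A C D = jacobiator B C D A := by
  simp only [jacobiator]; abel

end LinearMap

namespace DrinfeldDouble

variable {K V : Type*} [Field K] [AddCommGroup V] [Module K V]

def pairing (A C : V × Dual K V) : K := A.2 C.1 + C.2 A.1

lemma eq_zero_of_forall_pairing_eq_zero {A : V × Dual K V}
    (h : ∀ D, pairing A D = 0) : A = 0 := by
  refine Prod.ext ((forall_dual_apply_eq_zero_iff K A.1).mp fun φ => ?_) (LinearMap.ext fun v => ?_)
  · simpa [pairing] using h (0, φ)
  · simpa [pairing] using h (v, 0)

theorem eq_of_pairing_invariant (B₁ B₂ : (V × Dual K V) →ₗ[K] (V × Dual K V) →ₗ[K] (V × Dual K V))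
    (inv₁ : ∀ A C D, pairing (B₁ A C) D = pairing A (B₁ C D))
    (inv₂ : ∀ A C D, pairing (B₂ A C) D = pairing A (B₂ C D))
    (h_inl : ∀ x y : V, B₁ (x, 0) (y, 0) = B₂ (x, 0) (y, 0))
    (h_inr : ∀ f g : Dual K V, B₁ (0, f) (0, g) = B₂ (0, f) (0, g)) :
    B₁ = B₂ := by
  refine LinearMap.ext fun A => LinearMap.ext fun C => ?_
  rw [← sub_eq_zero]
  refine eq_zero_of_forall_pairing_eq_zero fun D => ?_
  let T (A C D : V × Dual K V) : K := pairing (B₁ A C - B₂ A C) D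
  have add_left (A A' C D) : T (A + A') C D = T A C D + T A' C D := by
    simp only [T, pairing, map_add, map_sub, LinearMap.add_apply, LinearMap.sub_apply,
      Prod.fst_add, Prod.snd_add, Prod.fst_sub, Prod.snd_sub]
    ring
  have cyclic (A C D) : T A C D = T C D A := by
    have := congr($(inv₁ A C D) - $(inv₂ A C D))
    simp only [T, pairing, map_sub, LinearMap.sub_apply, Prod.fst_sub, Prod.snd_sub] at this ⊢
    linear_combination this
  have vanish_inl (x y : V) (D) : T (x, 0) (y, 0) D = 0 := by simp [T, pairing, h_inl]
  have vanish_inr (f g : Dual K V) (D) : T (0, f) (0, g) D = 0 := by simp [T, pairing, h_inr]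
  exact eq_zero_of_cyclic_of_add_left T add_left cyclic (fun x y z => vanish_inl x y _)
    (fun x y f => vanish_inl x y _) (fun x f g => (cyclic _ _ _).trans (vanish_inr f g _))
    (fun f g h => vanish_inr f g _) A C D

variable {k L : Type*} [Field k] [LieRing L] [LieAlgebra k L]

lemma comp_ad_eq_neg_lie (f : Dual k L) (X : L) :
    f ∘ₗ (LieAlgebra.ad k L X : L →ₗ[k] L) = -⁅X, f⁆ := by
  ext; simp

variable (bra : Dual k L →ₗ[k] Dual k L →ₗ[k] Dual k L)

-- The compatibility condition of the statement, with `f ∘ ad X` written as `-⁅X, f⁆`.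
def CocycleCondition : Prop :=
  ∀ (X Y : L) (f g : Dual k L),
    bra f g ⁅X, Y⁆ = bra ⁅Y, f⁆ g X + bra f ⁅Y, g⁆ X - bra ⁅X, f⁆ g Y - bra f ⁅X, g⁆ Y

variable [FiniteDimensional k L]

-- The sign matches Mathlib's coadjoint action `⁅X, f⁆ = -f ∘ ad X` of `L` on `L*`, which makes
-- `bracket` below symmetric in the roles of `L` and `L*`.
noncomputable def dualCoadjoint : Dual k L →ₗ[k] L →ₗ[k] L :=
  -((evalEquiv k L).symm.conj.toLinearMap ∘ₗ Dual.transpose ∘ₗ bra)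

@[simp] lemma apply_dualCoadjoint (f h : Dual k L) (X : L) :
    h (dualCoadjoint bra f X) = -bra f h X := by
  simp [dualCoadjoint, LinearEquiv.conj_apply_apply, Dual.transpose_apply]

noncomputable def bracket : (L × Dual k L) →ₗ[k] (L × Dual k L) →ₗ[k] (L × Dual k L) :=
  LinearMap.mk₂ k
    (fun A C => (⁅A.1, C.1⁆ + dualCoadjoint bra A.2 C.1 - dualCoadjoint bra C.2 A.1,
      bra A.2 C.2 + ⁅A.1, C.2⁆ - ⁅C.1, A.2⁆))
    (fun _ _ _ => by ext <;> simp [add_lie, lie_add] <;> abel)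
    (fun _ _ _ => by ext <;> simp [smul_lie, lie_smul, smul_sub])
    (fun _ _ _ => by ext <;> simp [add_lie, lie_add] <;> abel)
    (fun _ _ _ => by ext <;> simp [smul_lie, lie_smul, smul_sub])

lemma bracket_apply (A C : L × Dual k L) :
    bracket bra A C = (⁅A.1, C.1⁆ + dualCoadjoint bra A.2 C.1 - dualCoadjoint bra C.2 A.1,
      bra A.2 C.2 + ⁅A.1, C.2⁆ - ⁅C.1, A.2⁆) := rfl

lemma bracket_inl_inl (X Y : L) : bracket bra (X, 0) (Y, 0) = (⁅X, Y⁆, 0) := by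
  simp [bracket_apply]

lemma bracket_inr_inr (f g : Dual k L) : bracket bra (0, f) (0, g) = (0, bra f g) := by
  simp [bracket_apply]

lemma bracket_isAlt (hbra : bra.IsAlt) : (bracket bra).IsAlt := fun A => by
  simp [bracket_apply, hbra.self_eq_zero]

lemma pairing_bracket (hbra : bra.IsAlt) (A C D : L × Dual k L) :
    pairing (bracket bra A C) D = pairing A (bracket bra C D) := by
  simp only [pairing, bracket_apply, map_add, map_sub, LinearMap.add_apply, LinearMap.sub_apply,
    apply_dualCoadjoint, Module.Dual.lie_apply, ← hbra.neg C.2 A.2, ← hbra.neg D.2 A.2,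
    LinearMap.neg_apply]
  rw [← lie_skew C.1 A.1, ← lie_skew D.1 A.1, map_neg, map_neg]
  ring

@[simp] lemma apply_lie_dualCoadjoint (h f : Dual k L) (x y : L) :
    h ⁅x, dualCoadjoint bra f y⁆ = bra f ⁅x, h⁆ y := by
  rw [← neg_neg (h _), ← Module.Dual.lie_apply, apply_dualCoadjoint, neg_neg]

@[simp] lemma apply_dualCoadjoint_lie (h f : Dual k L) (x y : L) :
    h ⁅dualCoadjoint bra f y, x⁆ = -bra f ⁅x, h⁆ y := by
  rw [← lie_skew, map_neg, apply_lie_dualCoadjoint]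

lemma jacobiator_inl_inl_inl (x y z : L) : (bracket bra).jacobiator (x, 0) (y, 0) (z, 0) = 0 := by
  simp only [LinearMap.jacobiator, bracket_inl_inl, Prod.mk_add_mk, add_zero]
  rw [← lie_skew ⁅x, y⁆ z, ← lie_skew ⁅y, z⁆ x, ← lie_skew ⁅z, x⁆ y, ← neg_add, ← neg_add,
    add_comm, ← add_assoc, lie_jacobi, neg_zero, Prod.mk_zero_zero]

lemma jacobiator_inr_inr_inr (hjac : ∀ f g h, bra.jacobiator f g h = 0) (f g h : Dual k L) :
    (bracket bra).jacobiator (0, f) (0, g) (0, h) = 0 := by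
  simpa [LinearMap.jacobiator, bracket_inr_inr] using hjac f g h

lemma jacobiator_inl_inl_inr (hcocycle : CocycleCondition bra) (x y : L) (f : Dual k L) :
    (bracket bra).jacobiator (x, 0) (y, 0) (0, f) = 0 := by
  simp only [LinearMap.jacobiator, bracket_apply]
  ext z
  · refine (forall_dual_apply_eq_zero_iff k _).mp fun h => ?_
    simp only [map_zero, LinearMap.zero_apply, add_zero, sub_zero, lie_zero, sub_self, zero_sub,
      lie_lie, zero_add, neg_lie, lie_skew, Prod.mk_add_mk, zero_lie, map_neg, LinearMap.neg_apply,
      neg_zero, lie_neg, sub_neg_eq_add, map_add, apply_dualCoadjoint, neg_neg,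
      apply_lie_dualCoadjoint, apply_dualCoadjoint_lie]
    linear_combination hcocycle x y f h
  · simp only [map_zero, LinearMap.zero_apply, add_zero, sub_zero, lie_zero, sub_self, zero_sub,
      lie_lie, zero_add, neg_lie, lie_skew, Prod.mk_add_mk, zero_lie, map_neg, LinearMap.neg_apply,
      neg_zero, lie_neg, sub_neg_eq_add, LinearMap.add_apply, LinearMap.sub_apply, Dual.lie_apply,
      neg_neg, Prod.snd_zero]
    ring

lemma jacobiator_inl_inr_inr (hbra : bra.IsAlt) (hjac : ∀ f g h, bra.jacobiator f g h = 0)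
    (hcocycle : CocycleCondition bra) (x : L) (f g : Dual k L) :
    (bracket bra).jacobiator (x, 0) (0, f) (0, g) = 0 := by
  simp only [LinearMap.jacobiator, bracket_apply]
  ext z
  · refine (forall_dual_apply_eq_zero_iff k _).mp fun h => ?_
    simp only [lie_zero, map_zero, LinearMap.zero_apply, add_zero, zero_sub, zero_add, sub_zero,
      map_neg, sub_neg_eq_add, neg_lie, zero_lie, lie_self, sub_self, Prod.mk_add_mk,
      LinearMap.neg_apply, neg_zero, lie_neg, map_add, apply_dualCoadjoint, neg_neg]
    have hjac' := congr($(hjac f g h) x)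
    simp only [LinearMap.jacobiator, LinearMap.add_apply, LinearMap.zero_apply] at hjac'
    have skew₁ : bra f (bra g h) x = -bra (bra g h) f x := by
      rw [← hbra.neg, LinearMap.neg_apply]
    have skew₂ : bra g (bra f h) x = bra (bra h f) g x := by
      rw [← hbra.neg, ← hbra.neg h]
      simp only [map_neg, LinearMap.neg_apply, neg_neg]
    linear_combination skew₁ - skew₂ - hjac'
  · simp only [lie_zero, map_zero, LinearMap.zero_apply, add_zero, zero_sub, zero_add, sub_zero,
      map_neg, sub_neg_eq_add, neg_lie, zero_lie, lie_self, sub_self, Prod.mk_add_mk,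
      LinearMap.neg_apply, neg_zero, lie_neg, LinearMap.add_apply, Dual.lie_apply,
      apply_dualCoadjoint_lie, neg_neg, Prod.snd_zero]
    have skew₁ : bra g ⁅z, f⁆ x = -bra ⁅z, f⁆ g x := by rw [← hbra.neg, LinearMap.neg_apply]
    have skew₂ : bra ⁅x, g⁆ f z = -bra f ⁅x, g⁆ z := by rw [← hbra.neg, LinearMap.neg_apply]
    linear_combination hcocycle x z f g + skew₁ - skew₂

theorem bracket_jacobi (hbra : bra.IsAlt) (hjac : ∀ f g h, bra.jacobiator f g h = 0)
    (hcocycle : CocycleCondition bra)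
    (A C D : L × Dual k L) : (bracket bra).jacobiator A C D = 0 :=
  eq_zero_of_cyclic_of_add_left _ (bracket bra).jacobiator_add_left (bracket bra).jacobiator_cyclic
    (jacobiator_inl_inl_inl bra) (jacobiator_inl_inl_inr bra hcocycle)
    (jacobiator_inl_inr_inr bra hbra hjac hcocycle) (jacobiator_inr_inr_inr bra hjac) A C D

end DrinfeldDouble

open DrinfeldDouble

theorem double_lie_algebra_exists_unique_general
    (k : Type*) [Field k]
    (L : Type*) [LieRing L] [LieAlgebra k L] [FiniteDimensional k L]
    (bra : Module.Dual k L →ₗ[k] Module.Dual k L →ₗ[k] Module.Dual k L)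
    (bra_antisym : ∀ f : Module.Dual k L, bra f f = 0)
    (bra_jacobi : ∀ f g h : Module.Dual k L,
      bra (bra f g) h + bra (bra g h) f + bra (bra h f) g = 0)
    (cocycle : ∀ (X Y : L) (f g : Module.Dual k L),
      bra f g ⁅X, Y⁆ =
          bra (f ∘ₗ (LieAlgebra.ad k L X : L →ₗ[k] L)) g Y
        + bra f (g ∘ₗ (LieAlgebra.ad k L X : L →ₗ[k] L)) Y
        - bra (f ∘ₗ (LieAlgebra.ad k L Y : L →ₗ[k] L)) g X
        - bra f (g ∘ₗ (LieAlgebra.ad k L Y : L →ₗ[k] L)) X) :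
    ∃! B : (L × Module.Dual k L) →ₗ[k] (L × Module.Dual k L) →ₗ[k] (L × Module.Dual k L),
      -- `B` is a Lie algebra bracket:
      (∀ A : L × Module.Dual k L, B A A = 0) ∧
      (∀ A C D : L × Module.Dual k L, B (B A C) D + B (B C D) A + B (B D A) C = 0) ∧
      -- (i) `L` is a Lie subalgebra:
      (∀ X Y : L, B (X, 0) (Y, 0) = (⁅X, Y⁆, (0 : Module.Dual k L))) ∧
      -- (ii) `L*` is a Lie subalgebra with bracket `bra`:
      (∀ f g : Module.Dual k L, B (0, f) (0, g) = ((0 : L), bra f g)) ∧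
      -- (iii) the pairing `⟨(X,f),(Y,g)⟩ = f Y + g X` is invariant:
      (∀ A C D : L × Module.Dual k L,
        (B A C).2 D.1 + D.2 (B A C).1 = A.2 (B C D).1 + (B C D).2 A.1) := by
  have hcocycle : CocycleCondition bra := fun X Y f g => by
    simp only [cocycle X Y f g, comp_ad_eq_neg_lie, map_neg, LinearMap.neg_apply]
    ring
  refine ⟨bracket bra, ⟨bracket_isAlt bra bra_antisym,
    bracket_jacobi bra bra_antisym bra_jacobi hcocycle, bracket_inl_inl bra, bracket_inr_inr bra,
    pairing_bracket bra bra_antisym⟩, ?_⟩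
  rintro B ⟨-, -, h_inl, h_inr, h_inv⟩
  exact eq_of_pairing_invariant B (bracket bra) h_inv (pairing_bracket bra bra_antisym)
    (fun x y => (h_inl x y).trans (bracket_inl_inl bra x y).symm)
    (fun f g => (h_inr f g).trans (bracket_inr_inr bra f g).symm)

/-- Existence and uniqueness of the double Lie algebra bracket on
`D = L ⊕ L*` extending the brackets of `L` and `L*` and making the canonical
symmetric pairing `⟨(X,f),(Y,g)⟩ = f(Y) + g(X)` invariant. -/
theorem double_lie_algebra_exists_unique
    (k : Type*) [Field k] [CharZero k]
    (L : Type*) [LieRing L] [LieAlgebra k L] [FiniteDimensional k L]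
    (bra : Module.Dual k L →ₗ[k] Module.Dual k L →ₗ[k] Module.Dual k L)
    (bra_antisym : ∀ f : Module.Dual k L, bra f f = 0)
    (bra_jacobi : ∀ f g h : Module.Dual k L,
      bra (bra f g) h + bra (bra g h) f + bra (bra h f) g = 0)
    (cocycle : ∀ (X Y : L) (f g : Module.Dual k L),
      bra f g ⁅X, Y⁆ =
          bra (f ∘ₗ (LieAlgebra.ad k L X : L →ₗ[k] L)) g Y
        + bra f (g ∘ₗ (LieAlgebra.ad k L X : L →ₗ[k] L)) Y
        - bra (f ∘ₗ (LieAlgebra.ad k L Y : L →ₗ[k] L)) g X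
        - bra f (g ∘ₗ (LieAlgebra.ad k L Y : L →ₗ[k] L)) X) :
    ∃! B : (L × Module.Dual k L) →ₗ[k] (L × Module.Dual k L) →ₗ[k] (L × Module.Dual k L),
      -- `B` is a Lie algebra bracket:
      (∀ A : L × Module.Dual k L, B A A = 0) ∧
      (∀ A C D : L × Module.Dual k L, B (B A C) D + B (B C D) A + B (B D A) C = 0) ∧
      -- (i) `L` is a Lie subalgebra:
      (∀ X Y : L, B (X, 0) (Y, 0) = (⁅X, Y⁆, (0 : Module.Dual k L))) ∧
      -- (ii) `L*` is a Lie subalgebra with bracket `bra`: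
      (∀ f g : Module.Dual k L, B (0, f) (0, g) = ((0 : L), bra f g)) ∧
      -- (iii) the pairing `⟨(X,f),(Y,g)⟩ = f Y + g X` is invariant:
      (∀ A C D : L × Module.Dual k L,
        (B A C).2 D.1 + D.2 (B A C).1 = A.2 (B C D).1 + (B C D).2 A.1) :=
  double_lie_algebra_exists_unique_general k L bra bra_antisym bra_jacobi cocycle
end

section
/- Let L be a finite-dimensional Lie algebra over a field k, and let D be a Lie algebra whose underlying vector space is L ⊕ L*, such that [(X,0),(Y,0)] = ([X,Y],0) for all X,Y ∈ L, [(0,f),(0,g)] = (0,[f,g]*) for some Lie bracket [·,·]* on L*, and such that the symmetric bilinear form ⟨(X,f),(Y,g)⟩ = f(Y)+g(X) satisfies ⟨[A,B],C⟩ = ⟨A,[B,C]⟩ for all A,B,C ∈ D. Let {X₁,…,X_N} be a basis of L and {f¹,…,f^N} the dual basis of L*, and let ι : D → U(D) be the canonical embedding of D into its universal enveloping algebra. Then the canonical element r = Σᵢ ι(Xᵢ,0) ⊗ ι(0,fⁱ) ∈ U(D) ⊗ U(D) satisfies the classical Yang–Baxter equation [r₁₂, r₁₃] + [r₁₂, r₂₃]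 + [r₁₃, r₂₃] = 0 in U(D) ⊗ U(D) ⊗ U(D). -/
/-!
Expanding the three commutators leg by leg, with `Xᵢ = (bᵢ, 0)` and `fⁱ = (0, bⁱ)`, turns the
CYBE into
`Σ [Xᵢ, Xⱼ] ⊗ fⁱ ⊗ fʲ + Σ Xᵢ ⊗ [fⁱ, Xⱼ] ⊗ fʲ + Σ Xᵢ ⊗ Xⱼ ⊗ [fⁱ, fʲ] = 0`.
Split `[fⁱ, Xⱼ]` into its `L*`- and `L`-components. Invariance of the pairing says that the
`L*`-component is `(ad Xⱼ)ᵗ fⁱ`, and that the transpose of `X ↦ [fⁱ, X]_L` is `[·, fⁱ]*`.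
Since `Σ T bᵢ ⊗ bⁱ = Σ bᵢ ⊗ Tᵗ bⁱ` for every endomorphism `T` of `L`, antisymmetry of the two
brackets makes the `L*`-part cancel the first sum and the `L`-part cancel the third.
-/

open scoped TensorProduct

theorem Module.Basis.sum_apply_dualBasis_eq_sum_apply_dualMap {R V M I : Type*} [CommRing R]
    [AddCommGroup V] [Module R V] [AddCommGroup M] [Module R M] [Fintype I] [DecidableEq I]
    (b : Module.Basis I R V) (β : V →ₗ[R] Module.Dual R V →ₗ[R] M) (T : V →ₗ[R] V) :
    ∑ i, β (T (b i)) (b.dualBasis i) = ∑ i, β (b i) (T.dualMap (b.dualBasis i)) := by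
  calc ∑ i, β (T (b i)) (b.dualBasis i)
      = ∑ i, ∑ j, b.dualBasis j (T (b i)) • β (b j) (b.dualBasis i) := by
        refine Finset.sum_congr rfl fun i _ => ?_
        conv_lhs => rw [← b.sum_repr (T (b i))]
        simp only [map_sum, map_smul, LinearMap.sum_apply, LinearMap.smul_apply,
          Module.Basis.dualBasis_apply]
    _ = ∑ j, β (b j) (∑ i, T.dualMap (b.dualBasis j) (b i) • b.dualBasis i) := by
        rw [Finset.sum_comm]
        simp only [map_sum, map_smul, LinearMap.dualMap_apply]
    _ = _ := by
        simp only [Module.Basis.coe_dualBasis, Module.Basis.sum_dual_apply_smul_coord]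

theorem Ring.lie_sum_sum {A I : Type*} [Ring A] [Fintype I] (x y : I → A) :
    ⁅∑ i, x i, ∑ j, y j⁆ = ∑ i, ∑ j, ⁅x i, y j⁆ := by
  simp only [Ring.lie_def, Finset.sum_mul_sum, Finset.sum_sub_distrib]
  rw [Finset.sum_comm (f := fun i j => y j * x i)]

theorem UniversalEnvelopingAlgebra.ι_lie {R L : Type*} [CommRing R] [LieRing L] [LieAlgebra R L]
    (x y : L) : ι R ⁅x, y⁆ = ⁅ι R x, ι R y⁆ :=
  letI := LieRing.ofAssociativeRing (A := UniversalEnvelopingAlgebra R L)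
  (ι R).map_lie x y

section LieLegs

variable {R A B C : Type*} [CommRing R] [Ring A] [Algebra R A] [Ring B] [Algebra R B]
  [Ring C] [Algebra R C]

theorem lie_tmul_tmul_one_tmul_one_tmul (a c : A) (b : B) (d : C) :
    ⁅a ⊗ₜ[R] (b ⊗ₜ[R] (1 : C)), c ⊗ₜ[R] ((1 : B) ⊗ₜ[R] d)⁆ = ⁅a, c⁆ ⊗ₜ[R] (b ⊗ₜ[R] d) := by
  simp only [Ring.lie_def, Algebra.TensorProduct.tmul_mul_tmul, one_mul, mul_one,
    TensorProduct.sub_tmul]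

theorem lie_tmul_tmul_one_one_tmul_tmul (a : A) (b c : B) (d : C) :
    ⁅a ⊗ₜ[R] (b ⊗ₜ[R] (1 : C)), (1 : A) ⊗ₜ[R] (c ⊗ₜ[R] d)⁆ = a ⊗ₜ[R] (⁅b, c⁆ ⊗ₜ[R] d) := by
  simp only [Ring.lie_def, Algebra.TensorProduct.tmul_mul_tmul, one_mul, mul_one,
    TensorProduct.sub_tmul, TensorProduct.tmul_sub]

theorem lie_tmul_one_tmul_one_tmul_tmul (a : A) (c : B) (b d : C) :
    ⁅a ⊗ₜ[R] ((1 : B) ⊗ₜ[R] b), (1 : A) ⊗ₜ[R] (c ⊗ₜ[R] d)⁆ = a ⊗ₜ[R] (c ⊗ₜ[R] ⁅b, d⁆) := by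
  simp only [Ring.lie_def, Algebra.TensorProduct.tmul_mul_tmul, one_mul, mul_one,
    TensorProduct.tmul_sub]

end LieLegs

namespace ManinTriple

variable {k L D : Type*} [CommRing k] [LieRing L] [LieAlgebra k L] [LieRing D] [LieAlgebra k D]
  (e : D ≃ₗ[k] L × Module.Dual k L)

def incL : L →ₗ[k] D := e.symm.toLinearMap ∘ₗ LinearMap.inl k L (Module.Dual k L)

def incR : Module.Dual k L →ₗ[k] D := e.symm.toLinearMap ∘ₗ LinearMap.inr k L (Module.Dual k L)

theorem incL_apply (X : L) : incL e X = e.symm (X, 0) := rfl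

theorem incR_apply (f : Module.Dual k L) : incR e f = e.symm (0, f) := rfl

/-- The pairing `⟨(X, f), (Y, g)⟩ = f Y + g X`, transported to `D` by `e`, is invariant. -/
def PairingInvariant : Prop :=
  ∀ A B C : D, (e ⁅A, B⁆).2 (e C).1 + (e C).2 (e ⁅A, B⁆).1
    = (e A).2 (e ⁅B, C⁆).1 + (e ⁅B, C⁆).2 (e A).1

theorem incL_fst_add_incR_snd (d : D) : incL e (e d).1 + incR e (e d).2 = d := by
  simp [incL_apply, incR_apply, ← map_add]

def fstAd (f : Module.Dual k L) : Module.End k L :=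
  LinearMap.fst k L (Module.Dual k L) ∘ₗ e.toLinearMap ∘ₗ LieAlgebra.ad k D (incR e f) ∘ₗ incL e

theorem fstAd_apply (f : Module.Dual k L) (X : L) : fstAd e f X = (e ⁅incR e f, incL e X⁆).1 :=
  rfl

variable {e}

theorem lie_incL_incL (hL : ∀ X Y : L, ⁅e.symm (X, 0), e.symm (Y, 0)⁆ = e.symm (⁅X, Y⁆, 0))
    (X Y : L) : ⁅incL e X, incL e Y⁆ = incL e ⁅X, Y⁆ :=
  hL X Y

theorem lie_incR_incR {bra : Module.Dual k L → Module.Dual k L → Module.Dual k L}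
    (hdual : ∀ f g, ⁅e.symm (0, f), e.symm (0, g)⁆ = e.symm (0, bra f g))
    (f g : Module.Dual k L) : ⁅incR e f, incR e g⁆ = incR e (bra f g) :=
  hdual f g

theorem bra_eq_neg_swap {bra : Module.Dual k L → Module.Dual k L → Module.Dual k L}
    (hdual : ∀ f g, ⁅e.symm (0, f), e.symm (0, g)⁆ = e.symm (0, bra f g))
    (f g : Module.Dual k L) : bra f g = -bra g f := by
  have h := hdual f g
  rw [← lie_skew, hdual g f, ← map_neg] at h
  simpa using congrArg Prod.snd (e.symm.injective h).symm

theorem dualMap_ad_eq_snd_lie_incR_incL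
    (hL : ∀ X Y : L, ⁅e.symm (X, 0), e.symm (Y, 0)⁆ = e.symm (⁅X, Y⁆, 0))
    (hinv : PairingInvariant e)
    (f : Module.Dual k L) (X : L) :
    (LieAlgebra.ad k L X).dualMap f = (e ⁅incR e f, incL e X⁆).2 := by
  ext Y
  have h := hinv (incR e f) (incL e X) (incL e Y)
  simp only [incL_apply, incR_apply, hL, LinearEquiv.apply_symm_apply, map_zero,
    LinearMap.zero_apply, add_zero] at h
  simp [incL_apply, incR_apply, h]

theorem dualMap_fstAd {bra : Module.Dual k L → Module.Dual k L → Module.Dual k L}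
    (hdual : ∀ f g, ⁅e.symm (0, f), e.symm (0, g)⁆ = e.symm (0, bra f g))
    (hinv : PairingInvariant e)
    (f g : Module.Dual k L) : (fstAd e f).dualMap g = bra g f := by
  ext X
  have h := hinv (incR e g) (incR e f) (incL e X)
  simp only [incL_apply, incR_apply, hdual, LinearEquiv.apply_symm_apply,
    map_zero, add_zero] at h
  simp [fstAd_apply, incL_apply, incR_apply, h]

section CanonicalElement

variable {M I : Type*} [AddCommGroup M] [Module k M] [Fintype I] [DecidableEq I]
  (φ : D →ₗ[k] M) (b : Module.Basis I k L)

theorem sum_incL_lie_tmul_add_sum_tmul_incR_snd_eq_zero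
    (hL : ∀ X Y : L, ⁅e.symm (X, 0), e.symm (Y, 0)⁆ = e.symm (⁅X, Y⁆, 0))
    (hinv : PairingInvariant e) :
    ∑ i, ∑ j, φ (incL e ⁅b i, b j⁆) ⊗ₜ[k]
        (φ (incR e (b.dualBasis i)) ⊗ₜ[k] φ (incR e (b.dualBasis j)))
      + ∑ i, ∑ j, φ (incL e (b i)) ⊗ₜ[k]
        (φ (incR e (e ⁅incR e (b.dualBasis i), incL e (b j)⁆).2) ⊗ₜ[k]
          φ (incR e (b.dualBasis j))) = 0 := by
  simp_rw [← Finset.sum_add_distrib]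
  rw [Finset.sum_comm]
  refine Finset.sum_eq_zero fun j _ => ?_
  let β : L →ₗ[k] Module.Dual k L →ₗ[k] M ⊗[k] (M ⊗[k] M) :=
    LinearMap.mk₂ k (fun X f => φ (incL e X) ⊗ₜ[k] (φ (incR e f) ⊗ₜ[k] φ (incR e (b.dualBasis j))))
      (by simp [TensorProduct.add_tmul]) (by simp [← TensorProduct.smul_tmul'])
      (by simp [TensorProduct.add_tmul, TensorProduct.tmul_add])
      (by simp [← TensorProduct.smul_tmul', TensorProduct.tmul_smul])
  have key := b.sum_apply_dualBasis_eq_sum_apply_dualMap β (LieAlgebra.ad k L (b j))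
  simp only [β, LinearMap.mk₂_apply, LieAlgebra.ad_apply,
    dualMap_ad_eq_snd_lie_incR_incL hL hinv] at key
  rw [Finset.sum_add_distrib, ← key, ← Finset.sum_add_distrib]
  refine Finset.sum_eq_zero fun i _ => ?_
  rw [← lie_skew, map_neg, map_neg, TensorProduct.neg_tmul, neg_add_cancel]

theorem sum_tmul_incL_fst_add_sum_tmul_incR_bra_eq_zero
    {bra : Module.Dual k L → Module.Dual k L → Module.Dual k L}
    (hdual : ∀ f g, ⁅e.symm (0, f), e.symm (0, g)⁆ = e.symm (0, bra f g))
    (hinv : PairingInvariant e) :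
    ∑ i, ∑ j, φ (incL e (b i)) ⊗ₜ[k]
        (φ (incL e (e ⁅incR e (b.dualBasis i), incL e (b j)⁆).1) ⊗ₜ[k]
          φ (incR e (b.dualBasis j)))
      + ∑ i, ∑ j, φ (incL e (b i)) ⊗ₜ[k]
        (φ (incL e (b j)) ⊗ₜ[k] φ (incR e (bra (b.dualBasis i) (b.dualBasis j)))) = 0 := by
  rw [← Finset.sum_add_distrib]
  refine Finset.sum_eq_zero fun i _ => ?_
  let β : L →ₗ[k] Module.Dual k L →ₗ[k] M ⊗[k] (M ⊗[k] M) :=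
    LinearMap.mk₂ k (fun X f => φ (incL e (b i)) ⊗ₜ[k] (φ (incL e X) ⊗ₜ[k] φ (incR e f)))
      (by simp [TensorProduct.add_tmul, TensorProduct.tmul_add])
      (by simp [← TensorProduct.smul_tmul', TensorProduct.tmul_smul])
      (by simp [TensorProduct.tmul_add]) (by simp [TensorProduct.tmul_smul])
  have key := b.sum_apply_dualBasis_eq_sum_apply_dualMap β (fstAd e (b.dualBasis i))
  simp only [β, LinearMap.mk₂_apply, fstAd_apply, dualMap_fstAd hdual hinv] at key
  rw [key, ← Finset.sum_add_distrib]
  refine Finset.sum_eq_zero fun j _ => ?_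
  rw [bra_eq_neg_swap hdual, map_neg, map_neg, TensorProduct.tmul_neg, TensorProduct.tmul_neg,
    neg_add_cancel]

theorem sum_lie_tmul_add_sum_tmul_lie_tmul_add_sum_tmul_tmul_lie_eq_zero
    {bra : Module.Dual k L → Module.Dual k L → Module.Dual k L}
    (hL : ∀ X Y : L, ⁅e.symm (X, 0), e.symm (Y, 0)⁆ = e.symm (⁅X, Y⁆, 0))
    (hdual : ∀ f g, ⁅e.symm (0, f), e.symm (0, g)⁆ = e.symm (0, bra f g))
    (hinv : PairingInvariant e) :
    ∑ i, ∑ j, φ ⁅incL e (b i), incL e (b j)⁆ ⊗ₜ[k]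
        (φ (incR e (b.dualBasis i)) ⊗ₜ[k] φ (incR e (b.dualBasis j)))
      + ∑ i, ∑ j, φ (incL e (b i)) ⊗ₜ[k]
        (φ ⁅incR e (b.dualBasis i), incL e (b j)⁆ ⊗ₜ[k] φ (incR e (b.dualBasis j)))
      + ∑ i, ∑ j, φ (incL e (b i)) ⊗ₜ[k]
        (φ (incL e (b j)) ⊗ₜ[k] φ ⁅incR e (b.dualBasis i), incR e (b.dualBasis j)⁆) = 0 := by
  have split : ∀ i j, φ ⁅incR e (b.dualBasis i), incL e (b j)⁆
      = φ (incL e (e ⁅incR e (b.dualBasis i), incL e (b j)⁆).1)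
        + φ (incR e (e ⁅incR e (b.dualBasis i), incL e (b j)⁆).2) := fun i j => by
    rw [← map_add, incL_fst_add_incR_snd]
  simp only [split, lie_incL_incL hL, lie_incR_incR hdual, TensorProduct.add_tmul,
    TensorProduct.tmul_add, Finset.sum_add_distrib]
  linear_combination (norm := module) (sum_incL_lie_tmul_add_sum_tmul_incR_snd_eq_zero φ b hL hinv)
    + sum_tmul_incL_fst_add_sum_tmul_incR_bra_eq_zero φ b hdual hinv

end CanonicalElement

end ManinTriple

theorem canonical_element_satisfies_CYBE_general
    (k : Type*) [Field k]
    (L : Type*) [LieRing L] [LieAlgebra k L]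
    (D : Type*) [LieRing D] [LieAlgebra k D]
    -- `D` has underlying vector space `L ⊕ L*`:
    (e : D ≃ₗ[k] L × Module.Dual k L)
    -- `L` is a Lie subalgebra of `D`:
    (hL : ∀ X Y : L, ⁅e.symm (X, 0), e.symm (Y, 0)⁆ = e.symm (⁅X, Y⁆, 0))
    -- `L*` is a Lie subalgebra of `D`, for some bracket `bra` on `L*`:
    (bra : Module.Dual k L → Module.Dual k L → Module.Dual k L)
    (hdual : ∀ f g : Module.Dual k L,
      ⁅e.symm (0, f), e.symm (0, g)⁆ = e.symm (0, bra f g))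
    -- invariance of the pairing `⟨(X,f),(Y,g)⟩ = f Y + g X`:
    (hinv : ∀ A B C : D,
      (e ⁅A, B⁆).2 (e C).1 + (e C).2 (e ⁅A, B⁆).1
        = (e A).2 (e ⁅B, C⁆).1 + (e ⁅B, C⁆).2 (e A).1)
    -- a basis of `L` (with its dual basis of `L*`):
    (I : Type*) [Fintype I] [DecidableEq I] (b : Module.Basis I k L)
    -- the components of the canonical element `r = Σᵢ ι(Xᵢ,0) ⊗ ι(0,fⁱ)`:
    (r12 r13 r23 : UniversalEnvelopingAlgebra k D ⊗[k]
      (UniversalEnvelopingAlgebra k D ⊗[k] UniversalEnvelopingAlgebra k D))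
    (hr12 : r12 = ∑ i : I,
      (UniversalEnvelopingAlgebra.ι k (e.symm (b i, 0)) ⊗ₜ[k]
        (UniversalEnvelopingAlgebra.ι k (e.symm (0, b.dualBasis i)) ⊗ₜ[k] 1)))
    (hr13 : r13 = ∑ i : I,
      (UniversalEnvelopingAlgebra.ι k (e.symm (b i, 0)) ⊗ₜ[k]
        ((1 : UniversalEnvelopingAlgebra k D) ⊗ₜ[k]
          UniversalEnvelopingAlgebra.ι k (e.symm (0, b.dualBasis i)))))
    (hr23 : r23 = ∑ i : I,
      ((1 : UniversalEnvelopingAlgebra k D) ⊗ₜ[k]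
        (UniversalEnvelopingAlgebra.ι k (e.symm (b i, 0)) ⊗ₜ[k]
          UniversalEnvelopingAlgebra.ι k (e.symm (0, b.dualBasis i))))) :
    (r12 * r13 - r13 * r12) + (r12 * r23 - r23 * r12) + (r13 * r23 - r23 * r13) = 0 := by
  subst hr12 hr13 hr23
  simp only [← ManinTriple.incL_apply, ← ManinTriple.incR_apply, ← Ring.lie_def, Ring.lie_sum_sum,
    lie_tmul_tmul_one_tmul_one_tmul, lie_tmul_tmul_one_one_tmul_tmul,
    lie_tmul_one_tmul_one_tmul_tmul, ← UniversalEnvelopingAlgebra.ι_lie]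
  let := LieRing.ofAssociativeRing (A := UniversalEnvelopingAlgebra k D)
  exact ManinTriple.sum_lie_tmul_add_sum_tmul_lie_tmul_add_sum_tmul_tmul_lie_eq_zero
    (UniversalEnvelopingAlgebra.ι k (L := D)).toLinearMap b hL hdual hinv

/-- The canonical element `r = Σᵢ ι(Xᵢ,0) ⊗ ι(0,fⁱ)` of the double Lie
algebra `D` (a Lie algebra whose underlying vector space is `L ⊕ L*`, containing `L`
and `L*` as subalgebras and with invariant canonical pairing), viewed inside
`U(D) ⊗ U(D)`, satisfies the classical Yang–Baxter equation. -/
theorem canonical_element_satisfies_CYBE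
    (k : Type*) [Field k]
    (L : Type*) [LieRing L] [LieAlgebra k L] [FiniteDimensional k L]
    (D : Type*) [LieRing D] [LieAlgebra k D]
    -- `D` has underlying vector space `L ⊕ L*`:
    (e : D ≃ₗ[k] L × Module.Dual k L)
    -- `L` is a Lie subalgebra of `D`:
    (hL : ∀ X Y : L, ⁅e.symm (X, 0), e.symm (Y, 0)⁆ = e.symm (⁅X, Y⁆, 0))
    -- `L*` is a Lie subalgebra of `D`, for some bracket `bra` on `L*`:
    (bra : Module.Dual k L → Module.Dual k L → Module.Dual k L)
    (hdual : ∀ f g : Module.Dual k L,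
      ⁅e.symm (0, f), e.symm (0, g)⁆ = e.symm (0, bra f g))
    -- invariance of the pairing `⟨(X,f),(Y,g)⟩ = f Y + g X`:
    (hinv : ∀ A B C : D,
      (e ⁅A, B⁆).2 (e C).1 + (e C).2 (e ⁅A, B⁆).1
        = (e A).2 (e ⁅B, C⁆).1 + (e ⁅B, C⁆).2 (e A).1)
    -- a basis of `L` (with its dual basis of `L*`):
    (I : Type*) [Fintype I] [DecidableEq I] (b : Module.Basis I k L)
    -- the components of the canonical element `r = Σᵢ ι(Xᵢ,0) ⊗ ι(0,fⁱ)`: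
    (r12 r13 r23 : UniversalEnvelopingAlgebra k D ⊗[k]
      (UniversalEnvelopingAlgebra k D ⊗[k] UniversalEnvelopingAlgebra k D))
    (hr12 : r12 = ∑ i : I,
      (UniversalEnvelopingAlgebra.ι k (e.symm (b i, 0)) ⊗ₜ[k]
        (UniversalEnvelopingAlgebra.ι k (e.symm (0, b.dualBasis i)) ⊗ₜ[k] 1)))
    (hr13 : r13 = ∑ i : I,
      (UniversalEnvelopingAlgebra.ι k (e.symm (b i, 0)) ⊗ₜ[k]
        ((1 : UniversalEnvelopingAlgebra k D) ⊗ₜ[k]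
          UniversalEnvelopingAlgebra.ι k (e.symm (0, b.dualBasis i)))))
    (hr23 : r23 = ∑ i : I,
      ((1 : UniversalEnvelopingAlgebra k D) ⊗ₜ[k]
        (UniversalEnvelopingAlgebra.ι k (e.symm (b i, 0)) ⊗ₜ[k]
          UniversalEnvelopingAlgebra.ι k (e.symm (0, b.dualBasis i))))) :
    (r12 * r13 - r13 * r12) + (r12 * r23 - r23 * r12) + (r13 * r23 - r23 * r13) = 0 :=
  canonical_element_satisfies_CYBE_general k L D e hL bra hdual hinv I b r12 r13 r23 hr12 hr13 hr23
end

section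
/- Let A be a bialgebra over a field k with comultiplication Δ, and let R be an invertible element of the algebra A ⊗ A such that (1) (τ∘Δ)(a) = R Δ(a) R⁻¹ for all a ∈ A, (2) (Δ ⊗ id)(R) = R₁₃R₂₃, and (3) (id ⊗ Δ)(R) = R₁₃R₁₂, where τ is the flip on A ⊗ A. Then R satisfies the quantum Yang–Baxter equation R₁₂R₁₃R₂₃ = R₂₃R₁₃R₁₂ in A ⊗ A ⊗ A. -/
/-!
Let `Δ₁ = (Δ ⊗ id) : A ⊗ A → A ⊗ A ⊗ A` and let `σ` swap the first two tensor factors.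
Axiom (1) says `R Δ(a) = τΔ(a) R`, hence `R₁₂ Δ₁(x) = σΔ₁(x) R₁₂` for `x = a ⊗ 1`; for `x = 1 ⊗ b`
it holds because `1 ⊗ 1 ⊗ b` commutes with `R₁₂`, and both sides are multiplicative in `x`, so
it holds for all `x`. Taking `x = R` and using axiom (2), `Δ₁(R) = R₁₃R₂₃` and
`σ(R₁₃R₂₃) = R₂₃R₁₃`, which is the Yang–Baxter equation.
-/

open scoped TensorProduct

namespace Algebra.TensorProduct

variable {R A B C X : Type*} [CommSemiring R] [Semiring A] [Algebra R A] [Semiring B]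
  [Algebra R B] [Semiring C] [Algebra R C] [Semiring X] [Algebra R X]

theorem semiconjBy_of_tmul_one_of_one_tmul {f g : A ⊗[R] B →ₐ[R] X} {u : X}
    (hleft : ∀ a : A, SemiconjBy u (f (a ⊗ₜ 1)) (g (a ⊗ₜ 1)))
    (hright : ∀ b : B, SemiconjBy u (f (1 ⊗ₜ b)) (g (1 ⊗ₜ b))) (x : A ⊗[R] B) :
    SemiconjBy u (f x) (g x) := by
  induction x using TensorProduct.induction_on with
  | zero => simp only [map_zero, SemiconjBy.zero_right]
  | tmul a b =>
    have := (hleft a).mul_right (hright b)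
    rwa [← map_mul, ← map_mul, tmul_mul_tmul, mul_one, one_mul] at this
  | add x y hx hy => simpa only [map_add] using hx.add_right hy

theorem commute_map_includeLeft_one_tmul_one_tmul (x : A ⊗[R] B) (c : C) :
    Commute (map (AlgHom.id R A) includeLeft x) ((1 : A) ⊗ₜ[R] ((1 : B) ⊗ₜ[R] c)) := by
  induction x using TensorProduct.induction_on with
  | zero => simp only [map_zero, Commute.zero_left]
  | tmul a b => simp [Commute, SemiconjBy, tmul_mul_tmul]
  | add x y hx hy => simpa only [map_add] using hx.add_left hy

theorem leftComm_map_includeLeft (x : A ⊗[R] B) :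
    leftComm R A B C (map (AlgHom.id R A) includeLeft x)
      = map (AlgHom.id R B) includeLeft (_root_.TensorProduct.comm R A B x) := by
  induction x using TensorProduct.induction_on <;> simp_all

theorem leftComm_map_includeRight (x : A ⊗[R] C) :
    leftComm R A B C (map (AlgHom.id R A) includeRight x) = includeRight x := by
  induction x using TensorProduct.induction_on <;> simp_all [TensorProduct.tmul_add]

theorem leftComm_includeRight (x : B ⊗[R] C) :
    leftComm R A B C (includeRight x) = map (AlgHom.id R B) includeRight x := by
  induction x using TensorProduct.induction_on <;> simp_all [TensorProduct.tmul_add]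

end Algebra.TensorProduct

namespace Bialgebra

open Coalgebra Algebra.TensorProduct

variable (R A B : Type*) [CommSemiring R] [Semiring A] [Bialgebra R A] [Semiring B] [Algebra R B]

noncomputable def comulRTensor : A ⊗[R] B →ₐ[R] A ⊗[R] (A ⊗[R] B) :=
  (Algebra.TensorProduct.assoc R R R A A B).toAlgHom.comp
    (Algebra.TensorProduct.map (comulAlgHom R A) (AlgHom.id R B))

theorem toLinearMap_comulRTensor : (comulRTensor R A B).toLinearMap
    = (_root_.TensorProduct.assoc R A A B).toLinearMap ∘ₗ
      _root_.TensorProduct.map comul LinearMap.id :=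
  TensorProduct.ext' fun _ _ => rfl

variable {R A B}

theorem comulRTensor_tmul_one (a : A) :
    comulRTensor R A B (a ⊗ₜ 1) = map (AlgHom.id R A) includeLeft (comul a) := by
  change Algebra.TensorProduct.assoc R R R A A B (comul a ⊗ₜ 1) = _
  induction comul (R := R) a using TensorProduct.induction_on <;> simp_all [TensorProduct.add_tmul]

theorem comulRTensor_one_tmul (b : B) :
    comulRTensor R A B (1 ⊗ₜ b) = (1 : A) ⊗ₜ[R] ((1 : A) ⊗ₜ[R] b) := by
  simp [comulRTensor, Algebra.TensorProduct.one_def]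

theorem semiconjBy_leftComm_comulRTensor {r : A ⊗[R] A}
    (hr : ∀ a : A, SemiconjBy r (comul a) (_root_.TensorProduct.comm R A A (comul a)))
    (x : A ⊗[R] B) :
    SemiconjBy (map (AlgHom.id R A) includeLeft r) (comulRTensor R A B x)
      (leftComm R A A B (comulRTensor R A B x)) := by
  refine semiconjBy_of_tmul_one_of_one_tmul
    (g := (leftComm R A A B).toAlgHom.comp (comulRTensor R A B)) (fun a => ?_) (fun b => ?_) x
  · simp only [AlgHom.comp_apply, AlgEquiv.coe_toAlgHom, comulRTensor_tmul_one,
      leftComm_map_includeLeft]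
    exact (hr a).map _
  · simp only [AlgHom.comp_apply, AlgEquiv.coe_toAlgHom, comulRTensor_one_tmul, leftComm_tmul]
    exact commute_map_includeLeft_one_tmul_one_tmul r b

end Bialgebra

theorem quasitriangular_implies_QYBE_general
    (k : Type*) [Field k] (A : Type*) [Semiring A] [Bialgebra k A]
    (R Rinv : A ⊗[k] A)
    (hRinv' : Rinv * R = 1)
    -- the three embeddings `A ⊗ A → A ⊗ A ⊗ A`:
    (e12 e13 e23 : A ⊗[k] A →ₐ[k] A ⊗[k] (A ⊗[k] A))
    (he12 : e12 = Algebra.TensorProduct.map (AlgHom.id k A)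
      (Algebra.TensorProduct.includeLeft : A →ₐ[k] A ⊗[k] A))
    (he13 : e13 = Algebra.TensorProduct.map (AlgHom.id k A)
      (Algebra.TensorProduct.includeRight : A →ₐ[k] A ⊗[k] A))
    (he23 : e23 = (Algebra.TensorProduct.includeRight : A ⊗[k] A →ₐ[k] A ⊗[k] (A ⊗[k] A)))
    -- axiom (1): `(τ∘Δ)(a) = R Δ(a) R⁻¹`:
    (h1 : ∀ a : A, TensorProduct.comm k A A (Coalgebra.comul a)
      = R * Coalgebra.comul a * Rinv)
    -- axiom (2): `(Δ ⊗ id)(R) = R₁₃ R₂₃`: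
    (h2 : ((TensorProduct.assoc k A A A).toLinearMap ∘ₗ
        TensorProduct.map Coalgebra.comul LinearMap.id) R = e13 R * e23 R) :
    e12 R * e13 R * e23 R = e23 R * e13 R * e12 R := by
  have hR : ∀ a : A,
      SemiconjBy R (Coalgebra.comul a) (TensorProduct.comm k A A (Coalgebra.comul a)) :=
    fun a => by rw [SemiconjBy, h1, mul_assoc, hRinv', mul_one]
  have hΔR : Bialgebra.comulRTensor k A A R = e13 R * e23 R := by
    rw [← h2, ← Bialgebra.toLinearMap_comulRTensor]
    rfl
  have hflip : Algebra.TensorProduct.leftComm k A A A (e13 R * e23 R) = e23 R * e13 R := by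
    rw [map_mul, he13, he23, Algebra.TensorProduct.leftComm_map_includeRight,
      Algebra.TensorProduct.leftComm_includeRight]
  calc e12 R * e13 R * e23 R = e12 R * Bialgebra.comulRTensor k A A R := by rw [mul_assoc, hΔR]
    _ = Algebra.TensorProduct.leftComm k A A A (Bialgebra.comulRTensor k A A R) * e12 R :=
      he12 ▸ Bialgebra.semiconjBy_leftComm_comulRTensor hR R
    _ = e23 R * e13 R * e12 R := by rw [hΔR, hflip]

/-- If `(A, R)` is a quasi-triangular bialgebra, i.e. `R ∈ A ⊗ A` is
invertible with `τ∘Δ = R Δ(·) R⁻¹`, `(Δ ⊗ id)(R) = R₁₃R₂₃` and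
`(id ⊗ Δ)(R) = R₁₃R₁₂`, then `R` satisfies the quantum Yang–Baxter equation
`R₁₂R₁₃R₂₃ = R₂₃R₁₃R₁₂` in `A ⊗ A ⊗ A`. -/
theorem quasitriangular_implies_QYBE
    (k : Type*) [Field k] (A : Type*) [Semiring A] [Bialgebra k A]
    (R Rinv : A ⊗[k] A)
    (hRinv : R * Rinv = 1) (hRinv' : Rinv * R = 1)
    -- the three embeddings `A ⊗ A → A ⊗ A ⊗ A`:
    (e12 e13 e23 : A ⊗[k] A →ₐ[k] A ⊗[k] (A ⊗[k] A))
    (he12 : e12 = Algebra.TensorProduct.map (AlgHom.id k A)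
      (Algebra.TensorProduct.includeLeft : A →ₐ[k] A ⊗[k] A))
    (he13 : e13 = Algebra.TensorProduct.map (AlgHom.id k A)
      (Algebra.TensorProduct.includeRight : A →ₐ[k] A ⊗[k] A))
    (he23 : e23 = (Algebra.TensorProduct.includeRight : A ⊗[k] A →ₐ[k] A ⊗[k] (A ⊗[k] A)))
    -- axiom (1): `(τ∘Δ)(a) = R Δ(a) R⁻¹`:
    (h1 : ∀ a : A, TensorProduct.comm k A A (Coalgebra.comul a)
      = R * Coalgebra.comul a * Rinv)
    -- axiom (2): `(Δ ⊗ id)(R) = R₁₃ R₂₃`: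
    (h2 : ((TensorProduct.assoc k A A A).toLinearMap ∘ₗ
        TensorProduct.map Coalgebra.comul LinearMap.id) R = e13 R * e23 R)
    -- axiom (3): `(id ⊗ Δ)(R) = R₁₃ R₁₂`:
    (h3 : (TensorProduct.map LinearMap.id Coalgebra.comul) R = e13 R * e12 R) :
    e12 R * e13 R * e23 R = e23 R * e13 R * e12 R :=
  quasitriangular_implies_QYBE_general k A R Rinv hRinv' e12 e13 e23 he12 he13 he23 h1 h2
end

section
/- Let (E, F, H) be an irreducible root-of-unity sl₂ triple on a nonzero finite-dimensional complex vector space W, with q = exp(2πi n/m) for coprime positive integers n, m and M = m (m odd) or m/2 (m even). Then W is spanned by eigenvectors of H. -/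
/-- `q = exp(2πi n/m)`. -/
noncomputable def qrou (n m : ℕ) : ℂ :=
  Complex.exp (2 * Real.pi * Complex.I * n / m)

/-- `q^x = exp(2πi n x/m)` for `x ∈ ℂ`. -/
noncomputable def qpow (n m : ℕ) (x : ℂ) : ℂ :=
  Complex.exp (2 * Real.pi * Complex.I * n * x / m)

/-- The q-number `[x]_q = (q^x − q^(−x))/(q − q⁻¹)`. -/
noncomputable def qnum (n m : ℕ) (x : ℂ) : ℂ :=
  (qpow n m x - qpow n m (-x)) / (qrou n m - (qrou n m)⁻¹)

/-- `M = m` if `m` is odd, `M = m/2` if `m` is even. -/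
def Mrou (m : ℕ) : ℕ := if m % 2 = 1 then m else m / 2

/-- An irreducible root-of-unity sl₂ triple `(E, F, H)` on a nonzero
finite-dimensional complex vector space `W` has `W` spanned by eigenvectors of `H`. -/
theorem spanned_by_eigenvectors_of_irreducible_triple
    (n m : ℕ) (hn1 : 1 ≤ n) (hnm : n ≤ m - 1) (hcop : Nat.Coprime n m)
    (W : Type*) [AddCommGroup W] [Module ℂ W] [FiniteDimensional ℂ W] [Nontrivial W]
    (E F H : Module.End ℂ W)
    (hHE : H * E - E * H = E) (hHF : H * F - F * H = -F)
    (hEM : E ^ Mrou m = 0) (hFM : F ^ Mrou m = 0)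
    (hEF : ∀ (v : W) (lam : ℂ), H v = lam • v →
      (E * F - F * E) v = qnum n m (2 * lam) • v)
    (hirr : ∀ p : Submodule ℂ W, (∀ w ∈ p, E w ∈ p) → (∀ w ∈ p, F w ∈ p) →
      (∀ w ∈ p, H w ∈ p) → p = ⊥ ∨ p = ⊤) :
    Submodule.span ℂ {v : W | v ≠ 0 ∧ ∃ lam : ℂ, H v = lam • v} = ⊤ := by
  set S : Set W := {v : W | v ≠ 0 ∧ ∃ lam : ℂ, H v = lam • v} with hS
  set p : Submodule ℂ W := Submodule.span ℂ S with hp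
  have hmem : ∀ v : W, (∃ lam : ℂ, H v = lam • v) → v ∈ p := by
    intro v hv
    rcases eq_or_ne v 0 with rfl | hv0
    · exact p.zero_mem
    · exact Submodule.subset_span ⟨hv0, hv⟩
  have hEinv : ∀ w ∈ p, E w ∈ p := by
    intro w hw
    induction hw using Submodule.span_induction with
    | mem x hx =>
        obtain ⟨hx0, lam, hlam⟩ := hx
        refine hmem _ ⟨lam + 1, ?_⟩
        have h1 : (H * E - E * H) x = E x := by rw [hHE]
        have h2 : H (E x) - E (H x) = E x := h1
        have h3 : H (E x) = E (H x) + E x := by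
          rw [eq_add_of_sub_eq h2]; abel
        rw [h3, hlam, map_smul, add_smul, one_smul]
    | zero => simpa using p.zero_mem
    | add x y _ _ hx hy => rw [map_add]; exact p.add_mem hx hy
    | smul c x _ hx => rw [map_smul]; exact p.smul_mem c hx
  have hFinv : ∀ w ∈ p, F w ∈ p := by
    intro w hw
    induction hw using Submodule.span_induction with
    | mem x hx =>
        obtain ⟨hx0, lam, hlam⟩ := hx
        refine hmem _ ⟨lam - 1, ?_⟩
        have h1 : (H * F - F * H) x = (-F) x := by rw [hHF]
        have h2 : H (F x) - F (H x) = -(F x) := h1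
        have h3 : H (F x) = F (H x) - F x := by
          rw [sub_eq_iff_eq_add.mp h2]; abel
        rw [h3, hlam, map_smul, sub_smul, one_smul]
    | zero => simpa using p.zero_mem
    | add x y _ _ hx hy => rw [map_add]; exact p.add_mem hx hy
    | smul c x _ hx => rw [map_smul]; exact p.smul_mem c hx
  have hHinv : ∀ w ∈ p, H w ∈ p := by
    intro w hw
    induction hw using Submodule.span_induction with
    | mem x hx =>
        obtain ⟨hx0, lam, hlam⟩ := id hx
        rw [hlam]
        exact p.smul_mem lam (Submodule.subset_span hx)
    | zero => simpa using p.zero_mem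
    | add x y _ _ hx hy => rw [map_add]; exact p.add_mem hx hy
    | smul c x _ hx => rw [map_smul]; exact p.smul_mem c hx
  rcases hirr p hEinv hFinv hHinv with hbot | htop
  · exfalso
    obtain ⟨c, hc⟩ := Module.End.exists_eigenvalue H
    obtain ⟨v, hv⟩ := hc.exists_hasEigenvector
    have hvp : v ∈ p := hmem v ⟨c, hv.apply_eq_smul⟩
    rw [hbot, Submodule.mem_bot] at hvp
    exact hv.2 hvp
  · exact htop
end

section
/- Let (E, F, H) be an irreducible root-of-unity sl₂ triple on a nonzero finite-dimensional complex vector space W, with q = exp(2πi n/m) for coprime positive integers n, m and M = m (m odd) or m/2 (m even). Then dim W ≤ M, and moreover there exists a nonzero highest-weight vector ψ ∈ W and j ∈ ℂ with Eψ = 0 and Hψ = jψ such that {F^r ψ : 0 ≤ r ≤ dim W − 1} is a basis of W. -/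
/-- An irreducible root-of-unity sl₂ triple on a nonzero
finite-dimensional complex vector space `W` satisfies `dim W ≤ M`, and there is a
nonzero highest-weight vector `ψ` (`Eψ = 0`, `Hψ = jψ`) such that
`{F^r ψ : 0 ≤ r ≤ dim W − 1}` is a basis of `W`. -/
theorem highest_weight_basis_of_irreducible_triple
    (n m : ℕ) (hn1 : 1 ≤ n) (hnm : n ≤ m - 1) (hcop : Nat.Coprime n m)
    (W : Type*) [AddCommGroup W] [Module ℂ W] [FiniteDimensional ℂ W] [Nontrivial W]
    (E F H : Module.End ℂ W)
    (hHE : H * E - E * H = E) (hHF : H * F - F * H = -F)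
    (hEM : E ^ Mrou m = 0) (hFM : F ^ Mrou m = 0)
    (hEF : ∀ (v : W) (lam : ℂ), H v = lam • v →
      (E * F - F * E) v = qnum n m (2 * lam) • v)
    (hirr : ∀ p : Submodule ℂ W, (∀ w ∈ p, E w ∈ p) → (∀ w ∈ p, F w ∈ p) →
      (∀ w ∈ p, H w ∈ p) → p = ⊥ ∨ p = ⊤) :
    Module.finrank ℂ W ≤ Mrou m ∧
    ∃ ψ : W, ψ ≠ 0 ∧ ∃ j : ℂ, E ψ = 0 ∧ H ψ = j • ψ ∧
      (LinearIndependent ℂ fun r : Fin (Module.finrank ℂ W) => (F ^ (r : ℕ)) ψ) ∧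
      Submodule.span ℂ
        (Set.range fun r : Fin (Module.finrank ℂ W) => (F ^ (r : ℕ)) ψ) = ⊤ := by
  classical
  have hm2 : 2 ≤ m := by omega
  have hM1 : 1 ≤ Mrou m := by unfold Mrou; split <;> omega
  -- commutation relations applied to vectors
  have hHE' : ∀ w : W, H (E w) = E (H w) + E w := by
    intro w
    have h := sub_eq_iff_eq_add.mp hHE
    have := LinearMap.ext_iff.mp h w
    simpa [Module.End.mul_apply, add_comm] using this
  have hHF' : ∀ w : W, H (F w) = F (H w) - F w := by
    intro w
    have h : H * F = F * H + -F := sub_eq_iff_eq_add'.mp hHF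
    have := LinearMap.ext_iff.mp h w
    simpa [Module.End.mul_apply, sub_eq_add_neg] using this
  -- find an eigenvector of H
  obtain ⟨μ, hμ⟩ := Module.End.exists_eigenvalue H
  obtain ⟨v, hv⟩ := hμ.exists_hasEigenvector
  have hv1 : H v = μ • v := hv.apply_eq_smul
  -- climb with E
  have hclimb : ∀ k : ℕ, H ((E ^ k) v) = (μ + k) • (E ^ k) v := by
    intro k
    induction k with
    | zero => simpa using hv1
    | succ k ih =>
      have h1 : (E ^ (k + 1)) v = E ((E ^ k) v) := by
        rw [pow_succ']; rfl
      rw [h1, hHE' ((E ^ k) v), ih, map_smul]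
      push_cast
      module
  have hEex : ∃ k, (E ^ (k + 1)) v = 0 := by
    refine ⟨Mrou m - 1, ?_⟩
    have h : Mrou m - 1 + 1 = Mrou m := by omega
    rw [h, hEM]; rfl
  set k := Nat.find hEex with hkdef
  have hk0 : (E ^ (k + 1)) v = 0 := Nat.find_spec hEex
  have hkne : (E ^ k) v ≠ 0 := by
    rcases Nat.eq_zero_or_pos k with h | h
    · rw [h]; simpa using hv.right
    · have := Nat.find_min hEex (show k - 1 < k by omega)
      rwa [Nat.sub_add_cancel h] at this
  set ψ : W := (E ^ k) v with hψdef
  set j : ℂ := μ + k with hjdef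
  have hψ0 : E ψ = 0 := by
    have : (E ^ (k + 1)) v = E ((E ^ k) v) := by rw [pow_succ']; rfl
    rw [hψdef, ← this, hk0]
  have hHψ : H ψ = j • ψ := hclimb k
  -- descend with F
  have hdesc : ∀ r : ℕ, H ((F ^ r) ψ) = (j - r) • (F ^ r) ψ := by
    intro r
    induction r with
    | zero => simpa using hHψ
    | succ r ih =>
      have h1 : (F ^ (r + 1)) ψ = F ((F ^ r) ψ) := by rw [pow_succ']; rfl
      rw [h1, hHF' ((F ^ r) ψ), ih, map_smul]
      push_cast
      module
  -- action of E on the F-string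
  have hEact : ∀ r : ℕ, ∃ c : ℂ, E ((F ^ (r + 1)) ψ) = c • (F ^ r) ψ := by
    intro r
    induction r with
    | zero =>
      refine ⟨qnum n m (2 * j), ?_⟩
      have h := hEF ψ j hHψ
      simp only [LinearMap.sub_apply, Module.End.mul_apply, hψ0, map_zero, sub_zero] at h
      simpa using h
    | succ r ih =>
      obtain ⟨c, hc⟩ := ih
      refine ⟨c + qnum n m (2 * (j - ((r : ℂ) + 1))), ?_⟩
      have hlam : H ((F ^ (r + 1)) ψ) = (j - ((r : ℂ) + 1)) • (F ^ (r + 1)) ψ := by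
        have := hdesc (r + 1); push_cast at this; exact this
      have h := hEF ((F ^ (r + 1)) ψ) (j - ((r : ℂ) + 1)) hlam
      simp only [LinearMap.sub_apply, Module.End.mul_apply] at h
      have h2 : (F ^ (r + 1 + 1)) ψ = F ((F ^ (r + 1)) ψ) := by rw [pow_succ']; rfl
      have h3 : F ((F ^ r) ψ) = (F ^ (r + 1)) ψ := by rw [pow_succ']; rfl
      have key : E ((F ^ (r + 1 + 1)) ψ) =
          qnum n m (2 * (j - ((r : ℂ) + 1))) • (F ^ (r + 1)) ψ + c • (F ^ (r + 1)) ψ := by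
        rw [h2, sub_eq_iff_eq_add.mp h, hc, map_smul, h3]
      rw [key, add_smul]
      abel
  -- the span of the F-string is invariant, hence everything
  set p : Submodule ℂ W := Submodule.span ℂ (Set.range fun r : ℕ => (F ^ r) ψ) with hpdef
  have hgen : ∀ r : ℕ, (F ^ r) ψ ∈ p := fun r => Submodule.subset_span ⟨r, rfl⟩
  have hmap : ∀ T : Module.End ℂ W, (∀ r : ℕ, T ((F ^ r) ψ) ∈ p) → ∀ w ∈ p, T w ∈ p := by
    intro T hT w hw
    have hle : p.map T ≤ p := by
      rw [hpdef, Submodule.map_span, Submodule.span_le]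
      rintro x ⟨y, ⟨r, rfl⟩, rfl⟩
      exact hT r
    exact hle ⟨w, hw, rfl⟩
  have hEp : ∀ w ∈ p, E w ∈ p := by
    apply hmap
    intro r
    cases r with
    | zero => simpa [hψ0] using p.zero_mem
    | succ r =>
      obtain ⟨c, hc⟩ := hEact r
      rw [hc]; exact p.smul_mem c (hgen r)
  have hFp : ∀ w ∈ p, F w ∈ p := by
    apply hmap
    intro r
    have : F ((F ^ r) ψ) = (F ^ (r + 1)) ψ := by rw [pow_succ']; rfl
    rw [this]; exact hgen (r + 1)
  have hHp : ∀ w ∈ p, H w ∈ p := by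
    apply hmap
    intro r
    rw [hdesc r]; exact p.smul_mem _ (hgen r)
  have hptop : p = ⊤ := by
    rcases hirr p hEp hFp hHp with h | h
    · exfalso
      have : ψ ∈ p := by simpa using hgen 0
      rw [h] at this
      exact hkne (by simpa using this)
    · exact h
  -- the length of the string
  have hFex : ∃ r : ℕ, (F ^ r) ψ = 0 := ⟨Mrou m, by rw [hFM]; rfl⟩
  set d := Nat.find hFex with hddef
  have hd0 : (F ^ d) ψ = 0 := Nat.find_spec hFex
  have hdM : d ≤ Mrou m := Nat.find_le (by rw [hFM]; rfl)
  have hne : ∀ r : ℕ, r < d → (F ^ r) ψ ≠ 0 := fun r hr => Nat.find_min hFex hr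
  have hzero : ∀ r : ℕ, d ≤ r → (F ^ r) ψ = 0 := by
    intro r hr
    have h1 : F ^ r = F ^ (r - d) * F ^ d := by rw [← pow_add, Nat.sub_add_cancel hr]
    rw [h1]
    show (F ^ (r - d)) ((F ^ d) ψ) = 0
    rw [hd0, map_zero]
  -- linear independence via distinct eigenvalues
  have hli : LinearIndependent ℂ fun r : Fin d => (F ^ (r : ℕ)) ψ := by
    apply Module.End.eigenvectors_linearIndependent' H (fun r : Fin d => j - (r : ℕ))
    · intro a b hab
      have h1 : ((a : ℕ) : ℂ) = ((b : ℕ) : ℂ) := by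
        have := hab
        rw [sub_right_inj] at this
        exact this
      exact Fin.ext (by exact_mod_cast h1)
    · intro r
      exact ⟨Module.End.mem_eigenspace_iff.mpr (hdesc r), hne r r.2⟩
  -- span over Fin d
  have hspan : Submodule.span ℂ (Set.range fun r : Fin d => (F ^ (r : ℕ)) ψ) = ⊤ := by
    rw [eq_top_iff, ← hptop, hpdef, Submodule.span_le]
    rintro x ⟨r, rfl⟩
    by_cases h : r < d
    · exact Submodule.subset_span ⟨⟨r, h⟩, rfl⟩
    · beta_reduce
      rw [hzero r (le_of_not_gt h)]
      exact Submodule.zero_mem _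
  -- finrank = d
  have hrank : Module.finrank ℂ W = d := by
    rw [Module.finrank_eq_card_basis (Module.Basis.mk hli hspan.ge)]
    exact Fintype.card_fin d
  refine ⟨by rw [hrank]; exact hdM, ψ, hkne, j, hψ0, hHψ, ?_, ?_⟩
  · rw [hrank]; exact hli
  · rw [hrank]; exact hspan
end

section
/- Let (E, F, H) be an irreducible root-of-unity sl₂ triple on a nonzero finite-dimensional complex vector space W of dimension p, with q = exp(2πi n/m) for coprime positive integers n, m and M = m (m odd) or m/2 (m even). If p < M, then there exist a nonzero vector ψ ∈ W and an integer z such that Eψ = 0 and Hψ = jψ with highest weight j = (p−1)/2 + (m/(4n))·z. -/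
/-!
Start from any `H`-eigenvector: `E` raises weights by `1`, and distinct weights give linearly
independent vectors, so the `E`-ladder stops at a highest-weight vector `ψ` of weight `μ`.
The `F`-ladder `ψ, Fψ, …, F^r ψ` (weights `μ - k`) spans an `E, F, H`-invariant subspace, hence
is a basis of `W`, and `p = r + 1`. Applying `E` to `F^(r+1) ψ = 0` gives
`∑_{k ≤ r} [2(μ - k)]_q = 0`. Since `r + 1 < M`, `q²` is not an `(r+1)`-st root of unity, and
this symmetric geometric sum vanishes only if `q^(4μ) = q^(2r)`, i.e. `n (4μ - 2r) ∈ mℤ`.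
-/

open Finset

namespace Module.End

variable {K V : Type*} [Field K] [AddCommGroup V] [Module K V] {E F H A : Module.End K V}
  {φ : K → K} {c μ : K} {v ψ : V} {r : ℕ}

theorem pow_apply_mem_eigenspace_of_commutator_eq_smul
    (hHA : H * A - A * H = c • A) (hv : v ∈ H.eigenspace μ) (k : ℕ) :
    (A ^ k) v ∈ H.eigenspace (μ + k * c) := by
  induction k with
  | zero => simpa using hv
  | succ k ih =>
    rw [mem_eigenspace_iff] at ih ⊢
    have hcomm := congrArg (· ((A ^ k) v)) hHA
    simp only [LinearMap.sub_apply, mul_apply, LinearMap.smul_apply] at hcomm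
    rw [pow_succ', mul_apply, eq_add_of_sub_eq hcomm, ih, map_smul]
    push_cast
    module

theorem exists_pow_apply_ne_zero_and_pow_succ_apply_eq_zero [CharZero K]
    [FiniteDimensional K V] (hc : c ≠ 0) (hHA : H * A - A * H = c • A)
    (hv : H.HasEigenvector μ v) : ∃ k : ℕ, (A ^ k) v ≠ 0 ∧ (A ^ (k + 1)) v = 0 := by
  by_contra! hne
  have hall : ∀ k : ℕ, (A ^ k) v ≠ 0 := fun k => by
    induction k with
    | zero => simpa using hv.2
    | succ k ih => exact hne k ih
  have hinj : Function.Injective fun k : ℕ => μ + k * c := fun i j hij => by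
    simpa [hc] using hij
  have hli := H.eigenvectors_linearIndependent' _ hinj (fun k => (A ^ k) v)
    fun k => ⟨pow_apply_mem_eigenspace_of_commutator_eq_smul hHA hv.1 k, hall k⟩
  have := hli.finite
  exact not_finite ℕ

theorem apply_pow_apply_eq_sub_smul_of_commutator_eq_neg
    (hHF : H * F - F * H = -F) (hψ : H ψ = μ • ψ) (k : ℕ) :
    H ((F ^ k) ψ) = (μ - k) • (F ^ k) ψ := by
  rw [← neg_one_smul K F] at hHF
  simpa [sub_eq_add_neg] using
    (pow_apply_mem_eigenspace_of_commutator_eq_smul hHF (mem_eigenspace_iff.2 hψ) k)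

theorem exists_hasEigenvector_apply_eq_zero [IsAlgClosed K] [CharZero K] [FiniteDimensional K V]
    [Nontrivial V] (hHE : H * E - E * H = E) :
    ∃ (ψ : V) (μ : K), H.HasEigenvector μ ψ ∧ E ψ = 0 := by
  obtain ⟨μ, hμ⟩ := H.exists_eigenvalue
  obtain ⟨v, hv⟩ := hμ.exists_hasEigenvector
  replace hHE : H * E - E * H = (1 : K) • E := by rw [one_smul, hHE]
  obtain ⟨k, hk, hk1⟩ := exists_pow_apply_ne_zero_and_pow_succ_apply_eq_zero one_ne_zero hHE hv
  rw [pow_succ', mul_apply] at hk1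
  exact ⟨_, _, ⟨pow_apply_mem_eigenspace_of_commutator_eq_smul hHE hv.1 k, hk⟩, hk1⟩

theorem apply_apply_eq_smul_add
    (hEF : ∀ (v : V) (lam : K), H v = lam • v → (E * F - F * E) v = φ lam • v)
    {w : V} {lam : K} (hw : H w = lam • w) : E (F w) = φ lam • w + F (E w) := by
  rw [← hEF w lam hw]
  simp

theorem apply_pow_succ_apply_eq_sum_smul (hHF : H * F - F * H = -F)
    (hEF : ∀ (v : V) (lam : K), H v = lam • v → (E * F - F * E) v = φ lam • v)
    (hψ : H ψ = μ • ψ) (hEψ : E ψ = 0) (i : ℕ) :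
    E ((F ^ (i + 1)) ψ) = (∑ k ∈ range (i + 1), φ (μ - k)) • (F ^ i) ψ := by
  have hwt := apply_pow_apply_eq_sub_smul_of_commutator_eq_neg hHF hψ
  induction i with
  | zero => simpa [hEψ] using apply_apply_eq_smul_add hEF hψ
  | succ i ih =>
    rw [pow_succ', mul_apply, apply_apply_eq_smul_add hEF (hwt (i + 1)), ih,
      map_smul, ← mul_apply, ← pow_succ', ← add_smul, sum_range_succ _ (i + 1),
      add_comm]

theorem pow_apply_ne_zero_of_le (hr : (F ^ r) ψ ≠ 0) {i : ℕ} (hi : i ≤ r) :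
    (F ^ i) ψ ≠ 0 := by
  intro h
  apply hr
  rw [← Nat.sub_add_cancel hi, pow_add, mul_apply, h, map_zero]

theorem span_pow_apply_eq_top (hHF : H * F - F * H = -F)
    (hEF : ∀ (v : V) (lam : K), H v = lam • v → (E * F - F * E) v = φ lam • v)
    (hirr : ∀ p : Submodule K V, (∀ w ∈ p, E w ∈ p) → (∀ w ∈ p, F w ∈ p) →
      (∀ w ∈ p, H w ∈ p) → p = ⊥ ∨ p = ⊤)
    (hψ : H ψ = μ • ψ) (hEψ : E ψ = 0) (hr : (F ^ r) ψ ≠ 0) (hr1 : (F ^ (r + 1)) ψ = 0) :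
    Submodule.span K (Set.range fun i : Fin (r + 1) => (F ^ (i : ℕ)) ψ) = ⊤ := by
  set U := Submodule.span K (Set.range fun i : Fin (r + 1) => (F ^ (i : ℕ)) ψ)
  have hmem : ∀ i ≤ r, (F ^ i) ψ ∈ U := fun i hi =>
    Submodule.subset_span ⟨⟨i, Nat.lt_succ_of_le hi⟩, rfl⟩
  have hinv : ∀ T : Module.End K V, (∀ i ≤ r, T ((F ^ i) ψ) ∈ U) → ∀ w ∈ U, T w ∈ U :=
    fun T hT _ hw => Submodule.span_le (p := U.comap T) |>.2
      (Set.range_subset_iff.2 fun i : Fin (r + 1) => hT i (Nat.le_of_lt_succ i.2)) hw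
  have hE : ∀ w ∈ U, E w ∈ U := hinv E fun
    | 0, _ => by simp [hEψ]
    | j + 1, hj => by
      rw [apply_pow_succ_apply_eq_sum_smul hHF hEF hψ hEψ]
      exact U.smul_mem _ (hmem j (by omega))
  have hF : ∀ w ∈ U, F w ∈ U := hinv F fun i hi => by
    rw [← mul_apply, ← pow_succ']
    rcases hi.lt_or_eq with hi | rfl
    · exact hmem _ hi
    · exact hr1 ▸ U.zero_mem
  have hH : ∀ w ∈ U, H w ∈ U := hinv H fun i hi => by
    rw [apply_pow_apply_eq_sub_smul_of_commutator_eq_neg hHF hψ]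
    exact U.smul_mem _ (hmem i hi)
  refine (hirr U hE hF hH).resolve_left fun hbot => ?_
  have h0 := hmem 0 (Nat.zero_le r)
  rw [hbot, Submodule.mem_bot] at h0
  exact pow_apply_ne_zero_of_le hr (Nat.zero_le r) h0

theorem finrank_eq_of_irreducible [CharZero K] (hHF : H * F - F * H = -F)
    (hEF : ∀ (v : V) (lam : K), H v = lam • v → (E * F - F * E) v = φ lam • v)
    (hirr : ∀ p : Submodule K V, (∀ w ∈ p, E w ∈ p) → (∀ w ∈ p, F w ∈ p) →
      (∀ w ∈ p, H w ∈ p) → p = ⊥ ∨ p = ⊤)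
    (hψ : H ψ = μ • ψ) (hEψ : E ψ = 0) (hr : (F ^ r) ψ ≠ 0) (hr1 : (F ^ (r + 1)) ψ = 0) :
    Module.finrank K V = r + 1 := by
  have hinj : Function.Injective fun i : Fin (r + 1) => μ - (i : ℕ) := fun i j hij => by
    simp_all [Fin.val_inj]
  have hli := H.eigenvectors_linearIndependent' _ hinj (fun i : Fin (r + 1) => (F ^ (i : ℕ)) ψ)
    fun i =>
    ⟨mem_eigenspace_iff.2 (apply_pow_apply_eq_sub_smul_of_commutator_eq_neg hHF hψ i),
      pow_apply_ne_zero_of_le hr (Nat.le_of_lt_succ i.2)⟩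
  rw [← finrank_top, ← span_pow_apply_eq_top hHF hEF hirr hψ hEψ hr hr1,
    finrank_span_eq_card hli, Fintype.card_fin]

end Module.End

theorem sq_eq_pow_of_sum_sub_inv_eq_zero {K : Type*} [Field K] {x t : K} {r : ℕ} (hx : x ≠ 0)
    (ht0 : t ≠ 0) (ht : t ^ (r + 1) ≠ 1)
    (h : ∑ k ∈ range (r + 1), (x * t⁻¹ ^ k - x⁻¹ * t ^ k) = 0) : x ^ 2 = t ^ r := by
  have hG : ∑ k ∈ range (r + 1), t ^ k ≠ 0 := by
    have ht1 : t ≠ 1 := by rintro rfl; simp at ht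
    rw [geom_sum_eq ht1]
    exact div_ne_zero (sub_ne_zero.2 ht) (sub_ne_zero.2 ht1)
  have hmul : x * t ^ r * ∑ k ∈ range (r + 1), (x * t⁻¹ ^ k - x⁻¹ * t ^ k)
      = (x ^ 2 - t ^ r) * ∑ k ∈ range (r + 1), t ^ k := by
    rw [mul_sum, sub_mul, mul_sum, mul_sum, ← sum_range_reflect (fun k => x ^ 2 * t ^ k),
      ← sum_sub_distrib]
    refine sum_congr rfl fun k hk => ?_
    rw [mem_range] at hk
    rw [show r + 1 - 1 - k = r - k by omega, pow_sub₀ t ht0 (by omega), inv_pow]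
    field_simp
  rw [h, mul_zero, eq_comm, mul_eq_zero] at hmul
  exact sub_eq_zero.1 (hmul.resolve_right hG)

theorem qpow_add (n m : ℕ) (x y : ℂ) : qpow n m (x + y) = qpow n m x * qpow n m y := by
  rw [qpow, qpow, qpow, ← Complex.exp_add]
  ring_nf

theorem qpow_ne_zero (n m : ℕ) (x : ℂ) : qpow n m x ≠ 0 := Complex.exp_ne_zero _

theorem qpow_neg (n m : ℕ) (x : ℂ) : qpow n m (-x) = (qpow n m x)⁻¹ := by
  refine eq_inv_of_mul_eq_one_left ?_
  rw [← qpow_add, neg_add_cancel, qpow]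
  simp

theorem qpow_natCast_mul (n m k : ℕ) (x : ℂ) : qpow n m (k * x) = qpow n m x ^ k := by
  induction k with
  | zero => simp [qpow]
  | succ k ih => rw [pow_succ, ← ih, ← qpow_add]; push_cast; ring_nf

theorem qrou_eq_qpow_one (n m : ℕ) : qrou n m = qpow n m 1 := by
  rw [qrou, qpow, mul_one]

theorem qpow_eq_one_iff {n m : ℕ} (hm : m ≠ 0) {x : ℂ} :
    qpow n m x = 1 ↔ ∃ z : ℤ, (n : ℂ) * x = z * m := by
  have h2πi : 2 * (Real.pi : ℂ) * Complex.I ≠ 0 := by simp [Real.pi_ne_zero]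
  have hm' : (m : ℂ) ≠ 0 := Nat.cast_ne_zero.2 hm
  rw [qpow, Complex.exp_eq_one_iff]
  refine exists_congr fun z => ⟨fun hz => ?_, fun hz => ?_⟩
  · apply mul_left_cancel₀ h2πi
    field_simp at hz
    linear_combination (2 * (Real.pi : ℂ) * Complex.I) * hz
  · rw [mul_assoc _ (n : ℂ), hz]
    field_simp

theorem Mrou_dvd_of_dvd_two_mul {m r : ℕ} (h : m ∣ 2 * r) : Mrou m ∣ r := by
  unfold Mrou
  split_ifs with hodd
  · exact Nat.Coprime.dvd_of_dvd_mul_left (Nat.coprime_two_right.2 (Nat.odd_iff.2 hodd)) h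
  · rwa [← Nat.mul_dvd_mul_iff_left two_pos,
      Nat.two_mul_div_two_of_even (Nat.even_iff.2 (by omega))]

theorem qpow_two_pow_ne_one {n m r : ℕ} (hcop : Nat.Coprime n m) (hr : 0 < r)
    (hrM : r < Mrou m) : qpow n m 2 ^ r ≠ 1 := by
  have hm : m ≠ 0 := by rintro rfl; simp [Mrou] at hrM
  rw [← qpow_natCast_mul, Ne, qpow_eq_one_iff hm]
  rintro ⟨z, hz⟩
  have hdvd : m ∣ n * (2 * r) := by
    have hzZ : ((n * (2 * r) : ℕ) : ℤ) = z * m := by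
      exact_mod_cast (by push_cast; linear_combination hz : ((n * (2 * r) : ℕ) : ℂ) = z * m)
    exact Int.natCast_dvd_natCast.1 ⟨z, by rw [hzZ, mul_comm]⟩
  have := Nat.le_of_dvd hr (Mrou_dvd_of_dvd_two_mul (hcop.symm.dvd_of_dvd_mul_left hdvd))
  omega

theorem qpow_eq_one_of_sum_qnum_eq_zero {n m r : ℕ} {μ : ℂ} (hq : qpow n m 2 ^ (r + 1) ≠ 1)
    (h : ∑ k ∈ range (r + 1), qnum n m (2 * (μ - k)) = 0) :
    qpow n m (4 * μ - 2 * r) = 1 := by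
  have hden : qrou n m - (qrou n m)⁻¹ ≠ 0 := by
    rw [qrou_eq_qpow_one, sub_ne_zero, ← qpow_neg]
    intro h1
    apply hq
    rw [show (2 : ℂ) = 1 + 1 by norm_num, qpow_add]
    nth_rewrite 2 [h1]
    rw [← qpow_add, add_neg_cancel, qpow]
    simp
  have hterm : ∀ k : ℕ, qpow n m (2 * (μ - k)) - qpow n m (-(2 * (μ - k)))
      = qpow n m (2 * μ) * (qpow n m 2)⁻¹ ^ k - (qpow n m (2 * μ))⁻¹ * qpow n m 2 ^ k := by
    intro k
    rw [← qpow_neg, ← qpow_neg, ← qpow_natCast_mul, ← qpow_natCast_mul, ← qpow_add, ← qpow_add]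
    ring_nf
  simp only [qnum, ← sum_div, div_eq_zero_iff, hden, or_false, hterm] at h
  have hsq := sq_eq_pow_of_sum_sub_inv_eq_zero (qpow_ne_zero _ _ _) (qpow_ne_zero _ _ _) hq h
  rw [show 4 * μ - 2 * r = (2 : ℕ) * (2 * μ) + -((r : ℂ) * 2) by push_cast; ring, qpow_add,
    qpow_natCast_mul, qpow_neg, qpow_natCast_mul, hsq,
    mul_inv_cancel₀ (pow_ne_zero _ (qpow_ne_zero _ _ _))]

theorem highest_weight_quantization_small_dim_general
    (n m : ℕ) (hcop : Nat.Coprime n m)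
    (W : Type*) [AddCommGroup W] [Module ℂ W] [FiniteDimensional ℂ W] [Nontrivial W]
    (E F H : Module.End ℂ W)
    (hHE : H * E - E * H = E) (hHF : H * F - F * H = -F)
    (hEF : ∀ (v : W) (lam : ℂ), H v = lam • v →
      (E * F - F * E) v = qnum n m (2 * lam) • v)
    (hirr : ∀ p : Submodule ℂ W, (∀ w ∈ p, E w ∈ p) → (∀ w ∈ p, F w ∈ p) →
      (∀ w ∈ p, H w ∈ p) → p = ⊥ ∨ p = ⊤)
    (hdim : Module.finrank ℂ W < Mrou m) :
    ∃ ψ : W, ψ ≠ 0 ∧ ∃ z : ℤ, E ψ = 0 ∧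
      H ψ = (((Module.finrank ℂ W : ℂ) - 1) / 2 + (m : ℂ) / (4 * (n : ℂ)) * z) • ψ := by
  obtain ⟨ψ, μ, hψ, hEψ⟩ := Module.End.exists_hasEigenvector_apply_eq_zero hHE
  have hHψ := hψ.apply_eq_smul
  obtain ⟨r, hr, hr1⟩ := Module.End.exists_pow_apply_ne_zero_and_pow_succ_apply_eq_zero
    (neg_ne_zero.2 one_ne_zero) (by rwa [neg_one_smul]) hψ
  have hrank := Module.End.finrank_eq_of_irreducible hHF hEF hirr hHψ hEψ hr hr1
  have hsum : ∑ k ∈ range (r + 1), qnum n m (2 * (μ - k)) = 0 := by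
    have h := Module.End.apply_pow_succ_apply_eq_sum_smul hHF hEF hHψ hEψ r
    rw [hr1, map_zero, eq_comm, smul_eq_zero] at h
    exact h.resolve_right hr
  have hq := qpow_two_pow_ne_one hcop r.succ_pos (hrank ▸ hdim :)
  have hm : m ≠ 0 := by rintro rfl; simp [Mrou] at hdim
  have hn : (n : ℂ) ≠ 0 := fun hn => hq (by simp [qpow, hn])
  obtain ⟨z, hz⟩ := (qpow_eq_one_iff hm).1 (qpow_eq_one_of_sum_qnum_eq_zero hq hsum)
  refine ⟨ψ, hψ.2, z, hEψ, ?_⟩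
  rw [hHψ, hrank]
  congr 1
  field_simp
  push_cast
  linear_combination 2 * hz

/-- An irreducible root-of-unity sl₂ triple on a nonzero space `W` of
dimension `p < M` has a nonzero highest-weight vector `ψ` (`Eψ = 0`, `Hψ = jψ`) whose
highest weight is `j = (p−1)/2 + (m/(4n))·z` for some integer `z`. -/
theorem highest_weight_quantization_small_dim
    (n m : ℕ) (hn1 : 1 ≤ n) (hnm : n ≤ m - 1) (hcop : Nat.Coprime n m)
    (W : Type*) [AddCommGroup W] [Module ℂ W] [FiniteDimensional ℂ W] [Nontrivial W]
    (E F H : Module.End ℂ W)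
    (hHE : H * E - E * H = E) (hHF : H * F - F * H = -F)
    (hEM : E ^ Mrou m = 0) (hFM : F ^ Mrou m = 0)
    (hEF : ∀ (v : W) (lam : ℂ), H v = lam • v →
      (E * F - F * E) v = qnum n m (2 * lam) • v)
    (hirr : ∀ p : Submodule ℂ W, (∀ w ∈ p, E w ∈ p) → (∀ w ∈ p, F w ∈ p) →
      (∀ w ∈ p, H w ∈ p) → p = ⊥ ∨ p = ⊤)
    (hdim : Module.finrank ℂ W < Mrou m) :
    ∃ ψ : W, ψ ≠ 0 ∧ ∃ z : ℤ, E ψ = 0 ∧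
      H ψ = (((Module.finrank ℂ W : ℂ) - 1) / 2 + (m : ℂ) / (4 * (n : ℂ)) * z) • ψ :=
  highest_weight_quantization_small_dim_general n m hcop W E F H hHE hHF hEF hirr hdim
end
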